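/- Let Θ ⊆ Δ and let I be a Θ-ideal in Φ⁺. Then the W_Θ-action on R preserves the ideal a(I): for every w ∈ W_Θ and every f ∈ a(I), one has w(f) ∈ a(I). In particular, the W_Θ-action on R descends to an action on the quotient ring R/a(I). -/

import Mathlib

open scoped Classical

noncomputable section

variable (V : Type) [AddCommGroup V] [Module ℚ V]

/-- A finite reduced crystallographic root system `Φ` spanning the `ℚ`-vector space `V`,
together with a fixed system of positive roots `Pos`, the corresponding set of simple
roots `Δ`, the coroots `coroot α` (so that the reflection associated to `α` is
`x ↦ x - coroot α x • α`), and `coeff α δ`, the (unique, by linear independence of `Δ`)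
nonnegative integral coefficient of the simple root `δ` in the expression of the
positive root `α` as a combination of simple roots. -/
structure RootSystemData where
  Φ : Finset V
  Pos : Finset V
  Δ : Finset V
  coeff : V → V → ℕ
  coroot : V → V →ₗ[ℚ] ℚ
  span_eq_top : Submodule.span ℚ (Φ : Set V) = ⊤
  root_ne_zero : ∀ α ∈ Φ, α ≠ (0 : V)
  reduced : ∀ α ∈ Φ, ∀ c : ℚ, c • α ∈ Φ → c = 1 ∨ c = -1
  coroot_self : ∀ α ∈ Φ, coroot α α = 2
  reflect_mem : ∀ α ∈ Φ, ∀ β ∈ Φ, β - coroot α β • α ∈ Φ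
  crystallographic : ∀ α ∈ Φ, ∀ β ∈ Φ, ∃ n : ℤ, coroot α β = (n : ℚ)
  pos_subset : Pos ⊆ Φ
  pos_or_neg : ∀ α ∈ Φ, α ∈ Pos ∨ -α ∈ Pos
  pos_not_neg : ∀ α ∈ Pos, -α ∉ Pos
  simple_subset : Δ ⊆ Pos
  simple_indep : LinearIndependent ℚ (fun δ : (Δ : Set V) => (δ : V))
  pos_combo : ∀ α ∈ Pos, α = ∑ δ ∈ Δ, (coeff α δ : ℚ) • δ

variable {V}

/-- `I` is a lower ideal in the set `Pos` of positive roots. -/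
def IsLowerIdealOf (Pos I : Finset V) : Prop :=
  I ⊆ Pos ∧ ∀ α ∈ I, ∀ β ∈ Pos, α - β ∈ Pos → α - β ∈ I

/-- `Φ⁺_Θ`: the positive roots that are `ℤ`-linear combinations of roots in `Θ`. -/
def posThetaOf (Pos Θ : Finset V) : Finset V :=
  Pos.filter fun α => ∃ c : V → ℤ, α = ∑ δ ∈ Θ, (c δ : ℚ) • δ

/-- `I` is an upper ideal with respect to `Θ`. -/
def IsUpperIdealWrt (Pos Θ I : Finset V) : Prop :=
  ∀ α ∈ I, ∀ β ∈ posThetaOf Pos Θ, α + β ∈ Pos → α + β ∈ I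

/-- `I` is a `Θ`-ideal. -/
def IsThetaIdealOf (Pos Θ I : Finset V) : Prop :=
  IsLowerIdealOf Pos I ∧ IsUpperIdealWrt Pos Θ I ∧ posThetaOf Pos Θ ⊆ I

/-- The partial order `α ≼_Θ β`: `β - α` is a (possibly empty) sum of
positive roots belonging to `Φ⁺_Θ`. -/
def leTheta (Pos Θ : Finset V) (α β : V) : Prop :=
  ∃ m : Multiset V, (∀ γ ∈ m, γ ∈ posThetaOf Pos Θ) ∧ β - α = m.sum

/-- `Y` is a Weyl type subset of the lower ideal `I`. -/
def IsWeylType (I Y : Finset V) : Prop :=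
  Y ⊆ I ∧ (∀ α ∈ Y, ∀ β ∈ Y, α + β ∈ I → α + β ∈ Y) ∧
    ∀ γ ∈ I, ∀ δ ∈ I, γ ∉ Y → δ ∉ Y → γ + δ ∈ I → γ + δ ∉ Y

/-- `g` is the reflection `s_α` associated to the root `α`. -/
def IsReflectionOf (D : RootSystemData V) (α : V) (g : V ≃ₗ[ℚ] V) : Prop :=
  ∀ x, g x = x - D.coroot α x • α

/-- The Weyl group `W`, generated by the reflections `s_α` for `α ∈ Φ`. -/
def WeylGroup (D : RootSystemData V) : Subgroup (V ≃ₗ[ℚ] V) :=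
  Subgroup.closure {g | ∃ α ∈ D.Φ, IsReflectionOf D α g}

/-- The parabolic subgroup `W_Θ` generated by the reflections `s_α` for `α ∈ Θ`. -/
def WThetaGroup (D : RootSystemData V) (Θ : Finset V) : Subgroup (V ≃ₗ[ℚ] V) :=
  Subgroup.closure {g | ∃ α ∈ Θ, IsReflectionOf D α g}

/-- The length `ℓ(w)`: the smallest number of simple reflections needed to write `w`. -/
noncomputable def len (D : RootSystemData V) (w : V ≃ₗ[ℚ] V) : ℕ :=
  sInf {p : ℕ | ∃ l : List (V ≃ₗ[ℚ] V), l.length = p ∧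
    (∀ g ∈ l, ∃ α ∈ D.Δ, IsReflectionOf D α g) ∧ l.prod = w}

/-- `N(w) = {α ∈ Φ⁺ : w(α) ∈ Φ⁻}` (where `Φ⁻ = -Φ⁺`). -/
def negSet (D : RootSystemData V) (w : V ≃ₗ[ℚ] V) : Finset V :=
  D.Pos.filter fun α => -(w α) ∈ D.Pos

/-- `W^Θ`, the set of minimal length left coset representatives:
`{w ∈ W : ℓ(w) < ℓ(w s_α) for all α ∈ Θ}`. -/
def minCosetReps (D : RootSystemData V) (Θ : Finset V) : Set (V ≃ₗ[ℚ] V) :=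
  {w | w ∈ WeylGroup D ∧ ∀ g : V ≃ₗ[ℚ] V,
    (∃ α ∈ Θ, IsReflectionOf D α g) → len D w < len D (w * g)}

/-- The height `ht(α)` of a positive root: the sum of its coefficients over the simple roots. -/
def rootHt (D : RootSystemData V) (α : V) : ℕ := ∑ δ ∈ D.Δ, D.coeff α δ

variable {V : Type} [AddCommGroup V] [Module ℚ V] {κ : Type}

/-- The embedding of `V` as the degree-one part of the symmetric algebra
`R = Sym(V)`, realized as the polynomial ring `ℚ[X_i : i ∈ κ]` on a basis of `V`. -/
noncomputable def embR (bV : Module.Basis κ ℚ V) : V →ₗ[ℚ] MvPolynomial κ ℚ :=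
  (Finsupp.linearCombination ℚ (MvPolynomial.X : κ → MvPolynomial κ ℚ)).comp
    bV.repr.toLinearMap

/-- The algebra endomorphism of `R = Sym(V)` extending a linear automorphism `w` of `V`. -/
noncomputable def liftW (bV : Module.Basis κ ℚ V) (w : V ≃ₗ[ℚ] V) :
    MvPolynomial κ ℚ →ₐ[ℚ] MvPolynomial κ ℚ :=
  MvPolynomial.aeval fun i => embR bV (w (bV i))

/-- `ψ : R → R` is a `ℚ`-linear derivation of `R`. -/
def IsDerivFn (ψ : MvPolynomial κ ℚ → MvPolynomial κ ℚ) : Prop :=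
  IsLinearMap ℚ ψ ∧ ∀ f g, ψ (f * g) = ψ f * g + f * ψ g

/-- `ψ` belongs to the logarithmic derivation module `D(A_I)` of the ideal
arrangement `A_I`: it is a derivation of `R` with `ψ(α) ∈ Rα` for all `α ∈ I`. -/
def InLogDer (bV : Module.Basis κ ℚ V) (I : Finset V)
    (ψ : MvPolynomial κ ℚ → MvPolynomial κ ℚ) : Prop :=
  IsDerivFn ψ ∧ ∀ α ∈ I, ∃ r : MvPolynomial κ ℚ, ψ (embR bV α) = r * embR bV α

/-- The action of `w` on derivations: `(w·ψ)(f) = w(ψ(w⁻¹ f))`. -/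
noncomputable def actDer (bV : Module.Basis κ ℚ V) (w : V ≃ₗ[ℚ] V)
    (ψ : MvPolynomial κ ℚ → MvPolynomial κ ℚ) :
    MvPolynomial κ ℚ → MvPolynomial κ ℚ :=
  fun f => liftW bV w (ψ (liftW bV w⁻¹ f))

/-- The quadratic form on `V` associated to a polynomial `Q ∈ R`, by evaluation in the
coordinates of the given basis. -/
noncomputable def polyQuadForm (bV : Module.Basis κ ℚ V) (Q : MvPolynomial κ ℚ) (v : V) : ℚ :=
  MvPolynomial.eval (fun i => bV.repr v i) Q

/-- The symmetric bilinear form associated to the quadratic form of `Q` is nondegenerate. -/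
def NondegQuad (bV : Module.Basis κ ℚ V) (Q : MvPolynomial κ ℚ) : Prop :=
  ∀ v : V, (∀ u : V,
    polyQuadForm bV Q (v + u) - polyQuadForm bV Q v - polyQuadForm bV Q u = 0) → v = 0

/-!
The twisted derivation `w·ψ` is again a derivation, and `(w·ψ)(Q) = w(ψ(Q))` because `Q` is
`W`-invariant. It lies in `D(A_I)` as soon as `w⁻¹` permutes the lines `ℚα`, `α ∈ I`, i.e.
stabilizes `I ∪ -I`. For `W_Θ` it suffices to check a simple reflection `s_δ`, `δ ∈ Θ`: roots in
`ℤΘ` go to `±Φ⁺_Θ ⊆ I`, and any other `α ∈ I` is moved along its unbroken `δ`-string, whose roots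
are all positive, so the lower and upper ideal properties keep it inside `I`.
-/

namespace RootSystemData

theorem finiteDimensional (D : RootSystemData V) : FiniteDimensional ℚ V :=
  Module.Finite.of_fg_top (D.span_eq_top ▸ Submodule.fg_span D.Φ.finite_toSet)

variable (D : RootSystemData V)

theorem coroot_injOn : Set.InjOn D.coroot D.Φ := by
  have : IsAddTorsionFree V := .of_isTorsionFree ℚ V
  intro α hα β hβ h
  exact Module.eq_of_mapsTo_reflection_of_mem D.Φ.finite_toSet (D.coroot_self α hα)
    (D.coroot_self β hβ) (h ▸ D.coroot_self α hα) (h ▸ D.coroot_self β hβ)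
    (fun γ hγ => D.reflect_mem α hα γ hγ) (fun γ hγ => D.reflect_mem β hβ γ hγ) hβ

def toRootPairing : RootPairing D.Φ ℚ V (Module.Dual ℚ V) :=
  haveI := D.finiteDimensional
  RootPairing.mk'' (Module.Dual.eval ℚ V) (Function.Embedding.subtype _)
    ⟨fun α => D.coroot α, fun α β h => Subtype.ext (D.coroot_injOn α.2 β.2 h)⟩
    (fun α => D.coroot_self α α.2)
    (by
      rintro α - ⟨β, rfl⟩
      exact ⟨⟨_, D.reflect_mem α α.2 β β.2⟩, rfl⟩)
    (by simpa using D.span_eq_top)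

instance : D.toRootPairing.IsCrystallographic where
  exists_value α β := by
    obtain ⟨n, hn⟩ := D.crystallographic β β.2 α α.2
    exact ⟨n, (eq_intCast _ n).trans hn.symm⟩

theorem mem_range_root_iff (x : V) : x ∈ Set.range D.toRootPairing.root ↔ x ∈ D.Φ :=
  ⟨fun ⟨β, hβ⟩ => hβ ▸ β.2, fun hx => ⟨⟨x, hx⟩, rfl⟩⟩

theorem add_zsmul_mem_of_mem_uIcc {α δ : V} (hα : α ∈ D.Φ) (hδ : δ ∈ D.Φ)
    (hli : LinearIndependent ℚ ![δ, α]) {z : ℤ} (hz : α + z • δ ∈ D.Φ) {k : ℤ}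
    (hk : k ∈ Set.uIcc 0 z) : α + k • δ ∈ D.Φ := by
  have hstring (k : ℤ) : α + k • δ ∈ D.Φ ↔ _ := (D.mem_range_root_iff _).symm.trans
    (D.toRootPairing.root_add_zsmul_mem_range_iff (i := ⟨δ, hδ⟩) (j := ⟨α, hα⟩) hli (z := k))
  rw [hstring] at hz ⊢
  exact Set.ordConnected_Icc.uIcc_subset ((hstring 0).1 (by simpa using hα)) hz hk

theorem linearIndependent_pair {α δ : V} (hα : α ∈ D.Φ) (hδ : δ ∈ D.Φ) (hne : α ≠ δ)
    (hne' : α ≠ -δ) : LinearIndependent ℚ ![δ, α] := by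
  rw [LinearIndependent.pair_iff' (D.root_ne_zero δ hδ)]
  intro c hc
  rcases D.reduced δ hδ c (hc ▸ hα) with rfl | rfl
  · exact hne (by simpa using hc.symm)
  · exact hne' (by simpa using hc.symm)

theorem mem_span_simple_of_mem_pos {α : V} (hα : α ∈ D.Pos) :
    α ∈ Submodule.span ℚ (D.Δ : Set V) := by
  rw [D.pos_combo α hα]
  exact Submodule.sum_mem _ fun δ hδ => Submodule.smul_mem _ _ (Submodule.subset_span hδ)

def simpleBasis : Module.Basis (D.Δ : Set V) ℚ V :=
  .mk D.simple_indep <| by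
    rw [Subtype.range_coe, ← D.span_eq_top, Submodule.span_le]
    intro α hα
    rcases D.pos_or_neg α hα with h | h
    · exact D.mem_span_simple_of_mem_pos h
    · simpa using D.mem_span_simple_of_mem_pos h

theorem simpleBasis_coord_simple {δ : V} (hδ : δ ∈ D.Δ) (γ : (D.Δ : Set V)) :
    D.simpleBasis.coord γ δ = if δ = γ then 1 else 0 := by
  have : δ = D.simpleBasis ⟨δ, hδ⟩ := by simp [simpleBasis]
  rw [this, Module.Basis.coord_apply, Module.Basis.repr_self, Finsupp.single_apply]
  simp [simpleBasis, Subtype.ext_iff, eq_comm]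

theorem simpleBasis_coord_of_mem_pos {α : V} (hα : α ∈ D.Pos) (γ : (D.Δ : Set V)) :
    D.simpleBasis.coord γ α = D.coeff α γ := by
  conv_lhs => rw [D.pos_combo α hα]
  rw [map_sum, Finset.sum_eq_single_of_mem (γ : V) γ.2]
  · rw [map_smul, D.simpleBasis_coord_simple γ.2, if_pos rfl, smul_eq_mul, mul_one]
  · intro δ hδ hne
    rw [map_smul, D.simpleBasis_coord_simple hδ, if_neg hne, smul_zero]

theorem exists_coeff_ne_zero_of_notMem_span {Θ : Finset V} (hΘ : Θ ⊆ D.Δ) {α : V}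
    (hα : α ∈ D.Pos) (hαΘ : α ∉ Submodule.span ℤ (Θ : Set V)) :
    ∃ γ ∈ D.Δ, γ ∉ Θ ∧ D.coeff α γ ≠ 0 := by
  by_contra! h
  apply hαΘ
  rw [D.pos_combo α hα, ← Finset.sum_subset hΘ fun γ hγ hγΘ => by simp [h γ hγ hγΘ]]
  exact Submodule.sum_mem _ fun γ hγ => by
    rw [Nat.cast_smul_eq_nsmul]
    exact nsmul_mem (Submodule.subset_span hγ) _

/-- `β` and `α` have the same positive coefficient at a simple root outside `Θ`. -/
theorem mem_pos_of_sub_mem_span {Θ : Finset V} (hΘ : Θ ⊆ D.Δ) {α β : V} (hα : α ∈ D.Pos)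
    (hαΘ : α ∉ Submodule.span ℤ (Θ : Set V)) (hβ : β ∈ D.Φ)
    (hβα : β - α ∈ Submodule.span ℤ (Θ : Set V)) : β ∈ D.Pos := by
  obtain ⟨γ, hγΔ, hγΘ, hcoeff⟩ := D.exists_coeff_ne_zero_of_notMem_span hΘ hα hαΘ
  set π := D.simpleBasis.coord ⟨γ, hγΔ⟩
  have hπΘ : Submodule.span ℤ (Θ : Set V) ≤ (LinearMap.ker π).restrictScalars ℤ := by
    rw [Submodule.span_le]
    intro δ hδ
    have hne : δ ≠ γ := fun h => hγΘ (h ▸ hδ)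
    simp [π, D.simpleBasis_coord_simple (hΘ hδ), hne]
  have hπβ : π β = D.coeff α γ := by
    rw [← sub_add_cancel β α, map_add, LinearMap.mem_ker.1 (hπΘ hβα), zero_add]
    exact D.simpleBasis_coord_of_mem_pos hα _
  refine (D.pos_or_neg β hβ).resolve_right fun hneg => ?_
  have hπneg := D.simpleBasis_coord_of_mem_pos hneg ⟨γ, hγΔ⟩
  rw [map_neg, hπβ] at hπneg
  have : (0 : ℚ) < D.coeff α γ := by exact_mod_cast Nat.pos_of_ne_zero hcoeff
  have : (0 : ℚ) ≤ D.coeff (-β) γ := Nat.cast_nonneg _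
  linarith

end RootSystemData

theorem IsLowerIdealOf.sub_nsmul_mem {G : Type} [AddCommGroup G] {Pos I : Finset G} {α δ : G}
    (hI : IsLowerIdealOf Pos I) (hα : α ∈ I) (hδ : δ ∈ Pos)
    {n : ℕ} (hpos : ∀ k ≤ n, α - k • δ ∈ Pos) : α - n • δ ∈ I := by
  induction n with
  | zero => simpa using hα
  | succ n ih =>
    have hstep := hpos (n + 1) le_rfl
    rw [succ_nsmul, ← sub_sub] at hstep ⊢
    exact hI.2 _ (ih fun k hk => hpos k (by omega)) δ hδ hstep

section ThetaIdeal

variable {Pos Θ I : Finset V} {α δ : V}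

theorem mem_posThetaOf_iff :
    α ∈ posThetaOf Pos Θ ↔ α ∈ Pos ∧ α ∈ Submodule.span ℤ (Θ : Set V) := by
  simp only [posThetaOf, Finset.mem_filter, Int.cast_smul_eq_zsmul]
  refine and_congr_right fun _ => ⟨?_, fun h => ?_⟩
  · rintro ⟨c, rfl⟩
    exact Submodule.sum_mem _ fun δ hδ => zsmul_mem (Submodule.subset_span hδ) _
  · obtain ⟨c, -, hc⟩ := Submodule.mem_span_finset.1 h
    exact ⟨c, hc.symm⟩

theorem IsUpperIdealWrt.add_nsmul_mem (hI : IsUpperIdealWrt Pos Θ I) (hα : α ∈ I)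
    (hδ : δ ∈ posThetaOf Pos Θ) {n : ℕ} (hpos : ∀ k ≤ n, α + k • δ ∈ Pos) :
    α + n • δ ∈ I := by
  induction n with
  | zero => simpa using hα
  | succ n ih =>
    have hstep := hpos (n + 1) le_rfl
    rw [succ_nsmul, ← add_assoc] at hstep ⊢
    exact hI _ (ih fun k hk => hpos k (by omega)) δ hδ hstep

theorem IsThetaIdealOf.add_zsmul_mem (hI : IsThetaIdealOf Pos Θ I) (hα : α ∈ I)
    (hδ : δ ∈ posThetaOf Pos Θ) {z : ℤ} (hpos : ∀ k ∈ Set.uIcc 0 z, α + k • δ ∈ Pos) :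
    α + z • δ ∈ I := by
  obtain ⟨n, rfl | rfl⟩ := z.eq_nat_or_neg
  · simpa using hI.2.1.add_nsmul_mem hα hδ fun k hk => by
      simpa using hpos k (by simp; omega)
  · simpa [← sub_eq_add_neg] using hI.1.sub_nsmul_mem hα (mem_posThetaOf_iff.1 hδ).1
      fun k hk => by simpa [← sub_eq_add_neg] using hpos (-k) (by simp; omega)

end ThetaIdeal

open scoped Pointwise

section Reflection

variable {D : RootSystemData V} {Θ I : Finset V}

theorem IsReflectionOf.mul_self {δ : V} (hδ : δ ∈ D.Φ) {g : V ≃ₗ[ℚ] V}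
    (hg : IsReflectionOf D δ g) : g * g = 1 := by
  refine LinearEquiv.ext fun x => ?_
  rw [LinearEquiv.mul_apply, hg (g x), hg x, map_sub, map_smul, D.coroot_self δ hδ, smul_eq_mul]
  change _ = x
  module

theorem IsThetaIdealOf.reflection_mem (hΘ : Θ ⊆ D.Δ) (hI : IsThetaIdealOf D.Pos Θ I)
    {δ : V} (hδ : δ ∈ Θ) {g : V ≃ₗ[ℚ] V} (hg : IsReflectionOf D δ g) {α : V} (hα : α ∈ I) :
    g α ∈ I ∨ -g α ∈ I := by
  have hδΦ : δ ∈ D.Φ := D.pos_subset (D.simple_subset (hΘ hδ))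
  have hαP : α ∈ D.Pos := hI.1.1 hα
  have hαΦ : α ∈ D.Φ := D.pos_subset hαP
  have hδΘ : δ ∈ Submodule.span ℤ (Θ : Set V) := Submodule.subset_span hδ
  obtain ⟨m, hm⟩ := D.crystallographic δ hδΦ α hαΦ
  have hgα : g α = α + (-m) • δ := by
    rw [hg, hm, Int.cast_smul_eq_zsmul, neg_smul, sub_eq_add_neg]
  have hgΦ : g α ∈ D.Φ := hg α ▸ D.reflect_mem δ hδΦ α hαΦ
  by_cases hαΘ : α ∈ Submodule.span ℤ (Θ : Set V)
  · have hgΘ : g α ∈ Submodule.span ℤ (Θ : Set V) := hgα ▸ add_mem hαΘ (zsmul_mem hδΘ _)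
    rcases D.pos_or_neg _ hgΦ with h | h
    · exact .inl (hI.2.2 (mem_posThetaOf_iff.2 ⟨h, hgΘ⟩))
    · exact .inr (hI.2.2 (mem_posThetaOf_iff.2 ⟨h, neg_mem hgΘ⟩))
  · have hli : LinearIndependent ℚ ![δ, α] :=
      D.linearIndependent_pair hαΦ hδΦ (fun h => hαΘ (h ▸ hδΘ))
        (fun h => hαΘ (h ▸ neg_mem hδΘ))
    refine .inl (hgα ▸ hI.add_zsmul_mem hα (mem_posThetaOf_iff.2 ⟨D.simple_subset (hΘ hδ), hδΘ⟩)
      fun k hk => D.mem_pos_of_sub_mem_span hΘ hαP hαΘ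
        (D.add_zsmul_mem_of_mem_uIcc hαΦ hδΦ hli (hgα ▸ hgΦ) hk) ?_)
    simpa using zsmul_mem hδΘ k

theorem WThetaGroup_le_stabilizer (hΘ : Θ ⊆ D.Δ) (hI : IsThetaIdealOf D.Pos Θ I) :
    WThetaGroup D Θ ≤ MulAction.stabilizer (V ≃ₗ[ℚ] V) ((I : Set V) ∪ -(I : Set V)) := by
  refine (Subgroup.closure_le _).2 ?_
  rintro g ⟨δ, hδ, hg⟩
  have hsub : g • ((I : Set V) ∪ -(I : Set V)) ⊆ (I : Set V) ∪ -(I : Set V) := by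
    rintro _ ⟨x, hx, rfl⟩
    rcases hx with hx | hx
    · exact hI.reflection_mem hΘ hδ hg hx
    · simpa [or_comm] using hI.reflection_mem hΘ hδ hg hx
  refine MulAction.mem_stabilizer_iff.2 (hsub.antisymm ?_)
  calc (I : Set V) ∪ -(I : Set V) = (g * g) • ((I : Set V) ∪ -(I : Set V)) := by
        rw [IsReflectionOf.mul_self (D.pos_subset (D.simple_subset (hΘ hδ))) hg, one_smul]
    _ ⊆ g • ((I : Set V) ∪ -(I : Set V)) := by
        rw [mul_smul]
        exact Set.smul_set_mono hsub

end Reflection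

section Derivations

variable (bV : Module.Basis κ ℚ V)

theorem embR_basis (i : κ) : embR bV (bV i) = MvPolynomial.X i := by
  simp [embR]

theorem liftW_embR (w : V ≃ₗ[ℚ] V) (v : V) : liftW bV w (embR bV v) = embR bV (w v) := by
  have : (liftW bV w).toLinearMap ∘ₗ embR bV = embR bV ∘ₗ w.toLinearMap :=
    bV.ext fun i => by simp [liftW, embR_basis]
  exact LinearMap.congr_fun this v

theorem liftW_liftW_inv (w : V ≃ₗ[ℚ] V) (f : MvPolynomial κ ℚ) :
    liftW bV w (liftW bV w⁻¹ f) = f := by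
  have : (liftW bV w).comp (liftW bV w⁻¹) = AlgHom.id ℚ _ := MvPolynomial.algHom_ext fun i => by
    simpa [liftW, embR_basis] using liftW_embR bV w (w⁻¹ (bV i))
  exact AlgHom.congr_fun this f

variable {bV}

theorem IsDerivFn.actDer {ψ : MvPolynomial κ ℚ → MvPolynomial κ ℚ} (hψ : IsDerivFn ψ)
    (w : V ≃ₗ[ℚ] V) : IsDerivFn (actDer bV w ψ) := by
  refine ⟨⟨fun f g => ?_, fun c f => ?_⟩, fun f g => ?_⟩ <;>
    simp only [_root_.actDer, map_add, map_smul, map_mul, hψ.1.map_add, hψ.1.map_smul, hψ.2,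
      liftW_liftW_inv]

theorem InLogDer.embR_dvd {I : Finset V} {ψ : MvPolynomial κ ℚ → MvPolynomial κ ℚ}
    (hψ : InLogDer bV I ψ) {β : V} (hβ : β ∈ (I : Set V) ∪ -(I : Set V)) :
    embR bV β ∣ ψ (embR bV β) := by
  rcases hβ with hβ | hβ
  · exact dvd_iff_exists_eq_mul_left.2 (hψ.2 β hβ)
  · have := dvd_iff_exists_eq_mul_left.2 (hψ.2 (-β) hβ)
    rwa [map_neg, hψ.1.1.map_neg, neg_dvd, dvd_neg] at this

theorem InLogDer.actDer {I : Finset V} {ψ : MvPolynomial κ ℚ → MvPolynomial κ ℚ}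
    (hψ : InLogDer bV I ψ) {w : V ≃ₗ[ℚ] V}
    (hw : w⁻¹ ∈ MulAction.stabilizer (V ≃ₗ[ℚ] V) ((I : Set V) ∪ -(I : Set V))) :
    InLogDer bV I (actDer bV w ψ) := by
  refine ⟨hψ.1.actDer w, fun α hα => dvd_iff_exists_eq_mul_left.1 ?_⟩
  have hwα : w⁻¹ α ∈ (I : Set V) ∪ -(I : Set V) := by
    rw [← MulAction.mem_stabilizer_iff.1 hw]
    exact Set.smul_mem_smul_set (Or.inl hα)
  have := map_dvd (liftW bV w) (hψ.embR_dvd hwα)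
  rwa [liftW_embR, ← LinearEquiv.mul_apply, mul_inv_cancel, LinearEquiv.coe_one, id,
    ← liftW_embR] at this

end Derivations

theorem aIdeal_stable_under_WTheta_general
    (D : RootSystemData V) (bV : Module.Basis κ ℚ V)
    (Θ : Finset V) (hΘ : Θ ⊆ D.Δ)
    (I : Finset V) (hI : IsThetaIdealOf D.Pos Θ I)
    (Q : MvPolynomial κ ℚ)
    (hQW : ∀ w ∈ WeylGroup D, liftW bV w Q = Q)
    (w : V ≃ₗ[ℚ] V) (hw : w ∈ WThetaGroup D Θ)
    (f : MvPolynomial κ ℚ)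
    (hf : ∃ ψ, InLogDer bV I ψ ∧ ψ Q = f) :
    ∃ ψ, InLogDer bV I ψ ∧ ψ Q = liftW bV w f := by
  obtain ⟨ψ, hψ, rfl⟩ := hf
  have hWΘ : WThetaGroup D Θ ≤ WeylGroup D := Subgroup.closure_mono fun g ⟨δ, hδ, hg⟩ =>
    ⟨δ, D.pos_subset (D.simple_subset (hΘ hδ)), hg⟩
  refine ⟨actDer bV w ψ, hψ.actDer (WThetaGroup_le_stabilizer hΘ hI (inv_mem hw)), ?_⟩
  rw [actDer, hQW w⁻¹ (hWΘ (inv_mem hw))]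

/-- Let `Θ ⊆ Δ` and let `I` be a `Θ`-ideal in `Φ⁺`. Then the
`W_Θ`-action on `R` preserves the ideal `a(I) = {ψ(Q) : ψ ∈ D(A_I)}`: for every
`w ∈ W_Θ` and every `f ∈ a(I)`, one has `w(f) ∈ a(I)` (in particular, the
`W_Θ`-action descends to the quotient ring `R/a(I)`). -/
theorem aIdeal_stable_under_WTheta
    (D : RootSystemData V) (bV : Module.Basis κ ℚ V)
    (Θ : Finset V) (hΘ : Θ ⊆ D.Δ)
    (I : Finset V) (hI : IsThetaIdealOf D.Pos Θ I)
    (Q : MvPolynomial κ ℚ) (hQ2 : Q.IsHomogeneous 2)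
    (hQW : ∀ w ∈ WeylGroup D, liftW bV w Q = Q)
    (w : V ≃ₗ[ℚ] V) (hw : w ∈ WThetaGroup D Θ)
    (f : MvPolynomial κ ℚ)
    (hf : ∃ ψ, InLogDer bV I ψ ∧ ψ Q = f) :
    ∃ ψ, InLogDer bV I ψ ∧ ψ Q = liftW bV w f :=
  aIdeal_stable_under_WTheta_general D bV Θ hΘ I hI Q hQW w hw f hf

end
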